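/- arXiv:1011.5718 — 4 statements merged into one kernel-verified Lean document; each statement's English description precedes it below -/
import Mathlib

section
/- If X is regularly varying with index α > 0 (spherical formulation, with spectral measure P̃ and quantile sequence a_n of ‖X‖), then X ⊗ X is regularly varying with index α/2: setting c_n = inf{x ≥ 0 : P(‖X ⊗ X‖ ≤ x) ≥ 1 − 1/n} (so c_n = a_n²), for every t > 0 the finite Borel measures A ↦ n P(‖X ⊗ X‖ > t c_n, (X ⊗ X)/‖X ⊗ X‖ ∈ A) on the unit sphere of L(B*, B) converge weakly, as n → ∞, to t^{−α/2} times the pushforward of P̃ under the continuous map s ↦ s ⊗ s. -/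
open MeasureTheory ProbabilityTheory Filter

/-- The rank-one operator `x ⊗ x : B* →L B`, `(x ⊗ x)(x*) = x*(x) • x`. -/
noncomputable def tensorSq {B : Type*} [NormedAddCommGroup B] [NormedSpace ℝ B]
    (x : B) : (B →L[ℝ] ℝ) →L[ℝ] B :=
  (ContinuousLinearMap.apply ℝ ℝ x).smulRight x

section Aux

variable {B : Type*} [NormedAddCommGroup B] [NormedSpace ℝ B]

lemma norm_tensorSq (x : B) : ‖tensorSq x‖ = ‖x‖ * ‖x‖ := by
  rw [tensorSq, ContinuousLinearMap.norm_smulRight_apply]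
  congr 1
  exact (NormedSpace.inclusionInDoubleDualLi ℝ).norm_map x

lemma tensorSq_smul (c : ℝ) (x : B) : tensorSq (c • x) = (c * c) • tensorSq x := by
  ext f
  simp [tensorSq, smul_smul]
  ring_nf

lemma continuous_tensorSq : Continuous (tensorSq (B := B)) := by
  have h := (ContinuousLinearMap.smulRightL ℝ (B →L[ℝ] ℝ) B).isBoundedBilinearMap.continuous
  exact h.comp ((ContinuousLinearMap.apply ℝ ℝ).continuous.prodMk continuous_id)

lemma sInf_sqrt_set (F : ℝ → ℝ) (p : ℝ) :
    sInf {x : ℝ | 0 ≤ x ∧ p ≤ F (Real.sqrt x)} =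
      sInf {x : ℝ | 0 ≤ x ∧ p ≤ F x} * sInf {x : ℝ | 0 ≤ x ∧ p ≤ F x} := by
  set S := {x : ℝ | 0 ≤ x ∧ p ≤ F x} with hSdef
  have himg : {x : ℝ | 0 ≤ x ∧ p ≤ F (Real.sqrt x)} = (fun x : ℝ => max x 0 * max x 0) '' S := by
    ext y
    constructor
    · rintro ⟨hy, hp⟩
      exact ⟨Real.sqrt y, ⟨Real.sqrt_nonneg y, hp⟩, by
        show (Real.sqrt y ⊔ 0) * (Real.sqrt y ⊔ 0) = y
        rw [max_eq_left (Real.sqrt_nonneg y), Real.mul_self_sqrt hy]⟩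
    · rintro ⟨x, ⟨hx, hp⟩, rfl⟩
      show 0 ≤ (x ⊔ 0) * (x ⊔ 0) ∧ p ≤ F (Real.sqrt ((x ⊔ 0) * (x ⊔ 0)))
      rw [max_eq_left hx]
      refine ⟨mul_nonneg hx hx, ?_⟩
      rwa [Real.sqrt_mul_self hx]
  rw [himg]
  rcases Set.eq_empty_or_nonempty S with hS | hS
  · simp [hS, Real.sInf_empty]
  · have hmono : Monotone fun x : ℝ => max x 0 * max x 0 := fun x y hxy =>
      mul_le_mul (max_le_max hxy le_rfl) (max_le_max hxy le_rfl)
        (le_max_right _ _) (le_max_right _ _)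
    have hcont : ContinuousAt (fun x : ℝ => max x 0 * max x 0) (sInf S) := by fun_prop
    have hbdd : BddBelow S := ⟨0, fun x hx => hx.1⟩
    have hmap := hmono.map_csInf_of_continuousAt hcont hS hbdd
    rw [← hmap]
    have h0 : 0 ≤ sInf S := Real.sInf_nonneg fun x hx => hx.1
    rw [max_eq_left h0]

end Aux

theorem stmt4
    {B : Type*} [NormedAddCommGroup B] [NormedSpace ℝ B] [CompleteSpace B]
    [SecondCountableTopology B] [MeasurableSpace B] [BorelSpace B]
    {Ω : Type*} [MeasurableSpace Ω] (P : Measure Ω) [IsProbabilityMeasure P]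
    (X : Ω → B) (hmeas : Measurable X)
    (α : ℝ) (hα : 0 < α)
    (a : ℕ → ℝ)
    (ha : ∀ n : ℕ, a n =
      sInf {x : ℝ | 0 ≤ x ∧ 1 - 1 / (n : ℝ) ≤ (P {ω | ‖X ω‖ ≤ x}).toReal})
    (Ptilde : Measure B) [IsProbabilityMeasure Ptilde]
    (hsphere : Ptilde {x : B | ‖x‖ = 1}ᶜ = 0)
    (hrv : ∀ t : ℝ, 0 < t → ∀ g : BoundedContinuousFunction B ℝ,
      Tendsto (fun n : ℕ => (n : ℝ) *
          ∫ ω in {ω | ‖X ω‖ > t * a n}, g (‖X ω‖⁻¹ • X ω) ∂P)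
        atTop (nhds (t ^ (-α) * ∫ x, g x ∂Ptilde)))
    (c : ℕ → ℝ)
    (hc : ∀ n : ℕ, c n =
      sInf {x : ℝ | 0 ≤ x ∧ 1 - 1 / (n : ℝ) ≤ (P {ω | ‖tensorSq (X ω)‖ ≤ x}).toReal}) :
    ∀ t : ℝ, 0 < t →
      ∀ g : BoundedContinuousFunction ((B →L[ℝ] ℝ) →L[ℝ] B) ℝ,
      Tendsto (fun n : ℕ => (n : ℝ) *
          ∫ ω in {ω | ‖tensorSq (X ω)‖ > t * c n},
            g (‖tensorSq (X ω)‖⁻¹ • tensorSq (X ω)) ∂P)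
        atTop (nhds (t ^ (-(α / 2)) * ∫ s, g (tensorSq s) ∂Ptilde)) := by
  intro t ht g
  have haneg : ∀ n, 0 ≤ a n := fun n =>
    (ha n) ▸ Real.sInf_nonneg (fun x hx => hx.1)
  -- `c n = a n * a n`
  have hca : ∀ n, c n = a n * a n := by
    intro n
    rw [hc n, ha n]
    have hset : {x : ℝ | 0 ≤ x ∧ 1 - 1/(n:ℝ) ≤ (P {ω | ‖tensorSq (X ω)‖ ≤ x}).toReal}
        = {x : ℝ | 0 ≤ x ∧ 1 - 1/(n:ℝ) ≤ (P {ω | ‖X ω‖ ≤ Real.sqrt x}).toReal} := by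
      ext x
      simp only [Set.mem_setOf_eq]
      refine and_congr_right fun hx => ?_
      have hs : {ω | ‖tensorSq (X ω)‖ ≤ x} = {ω | ‖X ω‖ ≤ Real.sqrt x} := by
        ext ω
        simp only [Set.mem_setOf_eq]
        rw [norm_tensorSq, Real.le_sqrt (norm_nonneg _) hx, sq]
      rw [hs]
    rw [hset]
    exact sInf_sqrt_set (fun y => (P {ω | ‖X ω‖ ≤ y}).toReal) _
  -- set equality
  have hset2 : ∀ n, {ω | ‖tensorSq (X ω)‖ > t * c n}
      = {ω | ‖X ω‖ > Real.sqrt t * a n} := by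
    intro n
    ext ω
    simp only [Set.mem_setOf_eq, norm_tensorSq, hca n, gt_iff_lt]
    have h2 : Real.sqrt t * a n < ‖X ω‖ ↔
        (Real.sqrt t * a n) * (Real.sqrt t * a n) < ‖X ω‖ * ‖X ω‖ :=
      mul_self_lt_mul_self_iff (mul_nonneg (Real.sqrt_nonneg t) (haneg n)) (norm_nonneg _)
    rw [h2, show (Real.sqrt t * a n) * (Real.sqrt t * a n)
        = (Real.sqrt t * Real.sqrt t) * (a n * a n) by ring, Real.mul_self_sqrt ht.le]
  -- integrand equality
  have hfun : ∀ x : B, x ≠ 0 →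
      ‖tensorSq x‖⁻¹ • tensorSq x = tensorSq (‖x‖⁻¹ • x) := by
    intro x hx
    rw [tensorSq_smul, norm_tensorSq, mul_inv]
  set G : BoundedContinuousFunction B ℝ :=
    g.compContinuous ⟨tensorSq, continuous_tensorSq⟩ with hG
  have heqfun : ∀ n : ℕ,
      (∫ ω in {ω | ‖tensorSq (X ω)‖ > t * c n},
          g (‖tensorSq (X ω)‖⁻¹ • tensorSq (X ω)) ∂P)
        = ∫ ω in {ω | ‖X ω‖ > Real.sqrt t * a n}, G (‖X ω‖⁻¹ • X ω) ∂P := by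
    intro n
    rw [hset2 n]
    refine setIntegral_congr_fun (measurableSet_lt measurable_const hmeas.norm) ?_
    intro ω hω
    have hpos : 0 < ‖X ω‖ :=
      lt_of_le_of_lt (mul_nonneg (Real.sqrt_nonneg t) (haneg n)) hω
    have hx0 : X ω ≠ 0 := by simpa using hpos.ne'
    show g _ = G _
    rw [hfun _ hx0]
    rfl
  have hmain := hrv (Real.sqrt t) (Real.sqrt_pos.mpr ht) G
  have hexp : Real.sqrt t ^ (-α) = t ^ (-(α/2)) := by
    rw [Real.sqrt_eq_rpow, ← Real.rpow_mul ht.le]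
    congr 1
    ring
  have hval : Real.sqrt t ^ (-α) * ∫ x, G x ∂Ptilde
      = t ^ (-(α/2)) * ∫ s, g (tensorSq s) ∂Ptilde := by
    rw [hexp]
    rfl
  have hfx : (fun n : ℕ => (n:ℝ) * ∫ ω in {ω | ‖tensorSq (X ω)‖ > t * c n},
        g (‖tensorSq (X ω)‖⁻¹ • tensorSq (X ω)) ∂P)
      = fun n : ℕ => (n:ℝ) * ∫ ω in {ω | ‖X ω‖ > Real.sqrt t * a n},
        G (‖X ω‖⁻¹ • X ω) ∂P := funext fun n => by rw [heqfun n]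
  rw [hfx, ← hval]
  exact hmain
end

section
/- Assume ‖X‖ has regularly varying tail with index α > 0, EX = 0 (Bochner sense) whenever E‖X‖ < ∞, and condition (2.4) holds when α > 1. Then for every γ ∈ (0,1) with γ > max(0, 1/2 − 1/α), n^{1−γ} ‖X̄_n‖ / a_n → 0 in probability as n → ∞, where X̄_n = S_n/n. -/
/-!
The event is `‖S n‖ > ε n^γ a n`. For the tail `T x = P(‖X‖ > x)`, the dyadic ratio limit
`T (2x) / T x → 2^(-α)` iterated along `x, 2x, 4x, …` gives Potter bounds
`x^(-α-δ) ≲ T x ≲ x^(-α+δ)`. The lower bound forces `a n ≥ n^ρ` for every `ρ < 1/α`, the upper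
one gives `E‖X‖^p < ∞` for every `p < α`. Markov's inequality then concludes as soon as
`E‖S n‖^p = O(n^θ)` with `θ / p < γ + 1/α`: for `α ≤ 1` take `p < α` close to `α` and `θ = 1`,
using `‖S n‖^p ≤ ∑ ‖X i‖^p`; for `α > 1` take `p = 1` and `θ = 1/β` from the moment
condition (2.4).
-/

open MeasureTheory ProbabilityTheory Filter Set

lemma le_pow_mul_of_le_mul_two_mul {g : ℝ → ℝ} {r M : ℝ} (hr : 0 ≤ r) (hM : 0 ≤ M)
    (h : ∀ x, M ≤ x → g (2 * x) ≤ r * g x) : ∀ k : ℕ, g (2 ^ k * M) ≤ r ^ k * g M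
  | 0 => by simp
  | k + 1 => calc
      g (2 ^ (k + 1) * M) = g (2 * (2 ^ k * M)) := by ring_nf
      _ ≤ r * g (2 ^ k * M) := h _ (le_mul_of_one_le_left hM (one_le_pow₀ one_le_two))
      _ ≤ r * (r ^ k * g M) := by gcongr; exact le_pow_mul_of_le_mul_two_mul hr hM h k
      _ = r ^ (k + 1) * g M := by ring

lemma two_rpow_neg_pow (s : ℝ) (k : ℕ) : ((2 : ℝ) ^ (-s)) ^ k = ((2 : ℝ) ^ k) ^ (-s) := by
  rw [← Real.rpow_mul_natCast zero_le_two, mul_comm, Real.rpow_natCast_mul zero_le_two]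

namespace Antitone

variable {T : ℝ → ℝ} {α : ℝ}

lemma exists_le_mul_rpow_neg (hT : Antitone T) (hT0 : ∀ x, 0 < T x)
    (hlim : Tendsto (fun x => T (2 * x) / T x) atTop (nhds ((2 : ℝ) ^ (-α))))
    {q : ℝ} (hq : 0 ≤ q) (hqα : q < α) : ∃ C, ∀ᶠ x in atTop, T x ≤ C * x ^ (-q) := by
  have hstep : ∀ᶠ x in atTop, T (2 * x) ≤ 2 ^ (-q) * T x :=
    (hlim.eventually (eventually_lt_nhds (Real.rpow_lt_rpow_of_exponent_lt one_lt_two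
      (neg_lt_neg hqα)))).mono fun x hx => ((div_lt_iff₀ (hT0 x)).1 hx).le
  obtain ⟨M, hM⟩ := eventually_atTop.1 (hstep.and (eventually_ge_atTop 1))
  have hM0 : 0 < M := one_pos.trans_le (hM M le_rfl).2
  refine ⟨T M * (2 * M) ^ q, eventually_atTop.2 ⟨M, fun x hx => ?_⟩⟩
  have hx0 : 0 < x := hM0.trans_le hx
  obtain ⟨k, hkx, hxk⟩ := exists_nat_pow_near ((one_le_div hM0).2 hx) one_lt_two
  rw [le_div_iff₀ hM0] at hkx
  rw [div_lt_iff₀ hM0] at hxk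
  calc T x ≤ T (2 ^ k * M) := hT hkx
    _ ≤ (2 ^ (-q)) ^ k * T M :=
        le_pow_mul_of_le_mul_two_mul (by positivity) hM0.le (fun y hy => (hM y hy).1) k
    _ ≤ (x / (2 * M)) ^ (-q) * T M := by
        rw [two_rpow_neg_pow]
        gcongr ?_ * _
        · exact (hT0 M).le
        refine Real.rpow_le_rpow_of_nonpos (by positivity) ?_ (neg_nonpos.2 hq)
        rw [div_le_iff₀ (by positivity)]
        linarith [show (2 : ℝ) ^ (k + 1) * M = 2 ^ k * (2 * M) by ring]
    _ = T M * (2 * M) ^ q * x ^ (-q) := by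
        rw [Real.rpow_neg (by positivity), Real.rpow_neg hx0.le,
          Real.div_rpow hx0.le (by positivity)]
        field_simp

lemma exists_mul_rpow_neg_le (hT : Antitone T) (hT0 : ∀ x, 0 < T x)
    (hlim : Tendsto (fun x => T (2 * x) / T x) atTop (nhds ((2 : ℝ) ^ (-α))))
    {p : ℝ} (hp : 0 ≤ p) (hαp : α < p) : ∃ c > 0, ∀ᶠ x in atTop, c * x ^ (-p) ≤ T x := by
  have hstep : ∀ᶠ x in atTop, 2 ^ (-p) * T x ≤ T (2 * x) :=
    (hlim.eventually (eventually_gt_nhds (Real.rpow_lt_rpow_of_exponent_lt one_lt_two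
      (neg_lt_neg hαp)))).mono fun x hx => ((lt_div_iff₀ (hT0 x)).1 hx).le
  obtain ⟨M, hM⟩ := eventually_atTop.1 (hstep.and (eventually_ge_atTop 1))
  have hM0 : 0 < M := one_pos.trans_le (hM M le_rfl).2
  refine ⟨T M * (2 / M) ^ (-p), by have := hT0 M; positivity,
    eventually_atTop.2 ⟨M, fun x hx => ?_⟩⟩
  obtain ⟨k, hkx, hxk⟩ := exists_nat_pow_near ((one_le_div hM0).2 hx) one_lt_two
  rw [div_lt_iff₀ hM0] at hxk
  -- the iteration bound for `-T` is the lower bound for `T`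
  have hiter := le_pow_mul_of_le_mul_two_mul (g := fun y => -T y) (r := 2 ^ (-p))
    (by positivity) hM0.le (fun y hy => by simpa [mul_neg] using (hM y hy).1) (k + 1)
  calc T M * (2 / M) ^ (-p) * x ^ (-p) = (2 * (x / M)) ^ (-p) * T M := by
        rw [mul_div_assoc', mul_comm 2 x, mul_div_assoc,
          Real.mul_rpow (hM0.le.trans hx) (by positivity)]
        ring
    _ ≤ (2 ^ (k + 1)) ^ (-p) * T M := by
        gcongr ?_ * _
        · exact (hT0 M).le
        refine Real.rpow_le_rpow_of_nonpos (by positivity) ?_ (neg_nonpos.2 hp)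
        rw [pow_succ']; gcongr
    _ = (2 ^ (-p)) ^ (k + 1) * T M := by rw [two_rpow_neg_pow]
    _ ≤ T (2 ^ (k + 1) * M) := by simpa using hiter
    _ ≤ T x := hT hxk.le

end Antitone

def survivalFun {Ω : Type*} [MeasurableSpace Ω] (P : Measure Ω) (Z : Ω → ℝ) (x : ℝ) : ℝ :=
  (P {ω | Z ω > x}).toReal

section Survival

variable {Ω : Type*} [MeasurableSpace Ω] {P : Measure Ω} {Z : Ω → ℝ}

lemma survivalFun_antitone [IsFiniteMeasure P] : Antitone (survivalFun P Z) := fun _ _ hxy =>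
  measureReal_mono fun _ h => lt_of_le_of_lt hxy h

lemma tendsto_survivalFun_atTop [IsFiniteMeasure P] (hZ : Measurable Z) :
    Tendsto (survivalFun P Z) atTop (nhds 0) := by
  have hlim := tendsto_measure_iInter_atTop (μ := P) (s := fun x : ℝ => {ω | x < Z ω})
    (fun x => (measurableSet_lt measurable_const hZ).nullMeasurableSet)
    (fun _ _ hxy _ h => lt_of_le_of_lt hxy h) ⟨0, measure_ne_top _ _⟩
  have hempty : ⋂ x : ℝ, {ω | x < Z ω} = ∅ :=
    eq_empty_of_forall_notMem fun ω h => lt_irrefl (Z ω) (mem_iInter.1 h (Z ω))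
  rw [hempty, measure_empty] at hlim
  exact (ENNReal.tendsto_toReal ENNReal.zero_ne_top).comp hlim

lemma measureReal_le_eq_one_sub_survivalFun [IsProbabilityMeasure P] (hZ : Measurable Z) (x : ℝ) :
    (P {ω | Z ω ≤ x}).toReal = 1 - survivalFun P Z x := by
  have hcompl : {ω | Z ω ≤ x} = {ω | x < Z ω}ᶜ := by ext; simp
  rw [hcompl]
  exact probReal_compl_eq_one_sub (measurableSet_lt measurable_const hZ)

lemma eventually_rpow_le_sInf_of_tendsto_ratio [IsProbabilityMeasure P] (hZ : Measurable Z)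
    (hpos : ∀ x, 0 < survivalFun P Z x) {α : ℝ}
    (hlim : Tendsto (fun x => survivalFun P Z (2 * x) / survivalFun P Z x) atTop
      (nhds ((2 : ℝ) ^ (-α))))
    {ρ : ℝ} (hρ : 0 < ρ) (hρα : ρ * α < 1) :
    ∀ᶠ n : ℕ in atTop,
      (n : ℝ) ^ ρ ≤ sInf {x : ℝ | 0 ≤ x ∧ 1 - 1 / (n : ℝ) ≤ (P {ω | Z ω ≤ x}).toReal} := by
  obtain ⟨p, hp, hpρ⟩ : ∃ p, max α 0 < p ∧ p < 1 / ρ :=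
    exists_between (max_lt ((lt_div_iff₀ hρ).2 (by linarith)) (by positivity))
  obtain ⟨c, hc, hlow⟩ := survivalFun_antitone.exists_mul_rpow_neg_le hpos hlim
    (le_max_right α 0 |>.trans hp.le) (le_max_left α 0 |>.trans_lt hp)
  have hρp : 0 < 1 - ρ * p := by rw [lt_div_iff₀ hρ] at hpρ; linarith
  have hnat := tendsto_natCast_atTop_atTop (R := ℝ)
  filter_upwards [((tendsto_rpow_atTop hρ).comp hnat).eventually hlow,
    (((tendsto_rpow_atTop hρp).comp hnat).const_mul_atTop hc).eventually_gt_atTop 1,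
    eventually_ge_atTop 1] with n hlow_n hbig hn
  have hn0 : (0 : ℝ) < n := by exact_mod_cast hn
  simp only [Function.comp_apply] at hlow_n hbig
  have hlarge : 1 / (n : ℝ) < survivalFun P Z ((n : ℝ) ^ ρ) := by
    refine lt_of_lt_of_le ?_ hlow_n
    rw [← Real.rpow_mul hn0.le, div_lt_iff₀ hn0, mul_assoc, ← Real.rpow_add_one hn0.ne']
    convert hbig using 3; ring
  obtain ⟨x₀, hsmall, hx₀⟩ := (((tendsto_survivalFun_atTop (P := P) hZ).eventually
    (eventually_lt_nhds (one_div_pos.2 hn0))).and (eventually_ge_atTop 0)).exists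
  simp only [measureReal_le_eq_one_sub_survivalFun hZ]
  refine le_csInf ⟨x₀, hx₀, by linarith⟩ fun x ⟨_, hx⟩ => ?_
  exact (survivalFun_antitone.reflect_lt (by linarith)).le

lemma integrable_rpow_of_tendsto_ratio [IsFiniteMeasure P] (hZ : Measurable Z) (hZ0 : ∀ ω, 0 ≤ Z ω)
    (hpos : ∀ x, 0 < survivalFun P Z x) {α : ℝ}
    (hlim : Tendsto (fun x => survivalFun P Z (2 * x) / survivalFun P Z x) atTop
      (nhds ((2 : ℝ) ^ (-α))))
    {p : ℝ} (hp : 0 < p) (hpα : p < α) : Integrable (fun ω => Z ω ^ p) P := by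
  obtain ⟨q, hpq, hqα⟩ := exists_between hpα
  obtain ⟨C, hC⟩ := survivalFun_antitone.exists_le_mul_rpow_neg hpos hlim (hp.trans hpq).le hqα
  obtain ⟨M, hM⟩ := eventually_atTop.1 (hC.and (eventually_ge_atTop 1))
  have hM0 : 0 < M := one_pos.trans_le (hM M le_rfl).2
  refine ⟨(hZ.pow_const p).aestronglyMeasurable,
    (hasFiniteIntegral_iff_ofReal (ae_of_all _ fun ω => by have := hZ0 ω; positivity)).2 ?_⟩
  rw [lintegral_rpow_eq_lintegral_meas_lt_mul P (ae_of_all _ hZ0) hZ.aemeasurable hp,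
    ← Ioc_union_Ioi_eq_Ioi hM0.le, lintegral_union measurableSet_Ioi Ioc_disjoint_Ioi_same]
  refine ENNReal.mul_lt_top ENNReal.ofReal_lt_top (ENNReal.add_lt_top.2 ⟨?_, ?_⟩)
  · have hint : IntegrableOn (fun t : ℝ => t ^ (p - 1)) (Ioc 0 M) := by
      rw [← intervalIntegrable_iff_integrableOn_Ioc_of_le hM0.le]
      exact intervalIntegral.intervalIntegrable_rpow' (by linarith)
    calc _ ≤ ∫⁻ t in Ioc 0 M, P univ * ENNReal.ofReal (t ^ (p - 1)) :=
          lintegral_mono fun t => by gcongr; exact subset_univ _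
      _ = P univ * ∫⁻ t in Ioc 0 M, ENNReal.ofReal (t ^ (p - 1)) :=
          lintegral_const_mul _ (by fun_prop)
      _ < ⊤ := ENNReal.mul_lt_top (measure_lt_top _ _) hint.lintegral_lt_top
  · have hint : IntegrableOn (fun t : ℝ => C * t ^ (p - q - 1)) (Ioi M) :=
      (integrableOn_Ioi_rpow_of_lt (by linarith) hM0).const_mul C
    refine lt_of_le_of_lt (setLIntegral_mono (by fun_prop) fun t ht => ?_) hint.lintegral_lt_top
    have ht0 : 0 < t := hM0.trans ht
    rw [← ENNReal.ofReal_toReal (measure_ne_top P _), ← ENNReal.ofReal_mul ENNReal.toReal_nonneg,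
      show p - q - 1 = -q + (p - 1) by ring, Real.rpow_add ht0, ← mul_assoc]
    exact ENNReal.ofReal_le_ofReal (by gcongr; exact (hM t ht.le).1)

end Survival

lemma norm_sum_rpow_le_sum_norm_rpow {ι B : Type*} [SeminormedAddCommGroup B] (s : Finset ι)
    (f : ι → B) {p : ℝ} (hp0 : 0 < p) (hp1 : p ≤ 1) :
    ‖∑ i ∈ s, f i‖ ^ p ≤ ∑ i ∈ s, ‖f i‖ ^ p := by
  classical
  induction s using Finset.induction_on with
  | empty => simp [Real.zero_rpow hp0.ne']
  | insert i s hi ih =>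
    rw [Finset.sum_insert hi, Finset.sum_insert hi]
    calc ‖f i + ∑ j ∈ s, f j‖ ^ p ≤ (‖f i‖ + ‖∑ j ∈ s, f j‖) ^ p := by
          gcongr; exact norm_add_le _ _
      _ ≤ ‖f i‖ ^ p + ‖∑ j ∈ s, f j‖ ^ p :=
          Real.rpow_add_le_add_rpow (norm_nonneg _) (norm_nonneg _) hp0.le hp1
      _ ≤ ‖f i‖ ^ p + ∑ j ∈ s, ‖f j‖ ^ p := by gcongr

section MomentGrowth

variable {Ω B : Type*} [MeasurableSpace Ω] {P : Measure Ω} [NormedAddCommGroup B]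

def HasMomentGrowth (P : Measure Ω) (S : ℕ → Ω → B) (p θ : ℝ) : Prop :=
  (∀ n, Integrable (fun ω => ‖S n ω‖ ^ p) P) ∧
    ∃ K, ∀ n : ℕ, 1 ≤ n → ∫ ω, ‖S n ω‖ ^ p ∂P ≤ K * (n : ℝ) ^ θ

lemma hasMomentGrowth_of_identDistrib [MeasurableSpace B] [BorelSpace B]
    [SecondCountableTopology B] {X S : ℕ → Ω → B} (hX : ∀ i, IdentDistrib (X i) (X 0) P P)
    (hS : ∀ n ω, S n ω = ∑ i ∈ Finset.range n, X i ω) {p : ℝ} (hp0 : 0 < p) (hp1 : p ≤ 1)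
    (hint : Integrable (fun ω => ‖X 0 ω‖ ^ p) P) : HasMomentGrowth P S p 1 := by
  have hXp : ∀ i, IdentDistrib (fun ω => ‖X i ω‖ ^ p) (fun ω => ‖X 0 ω‖ ^ p) P P :=
    fun i => (hX i).comp (u := fun y : B => ‖y‖ ^ p) (by fun_prop)
  have hint_i : ∀ i, Integrable (fun ω => ‖X i ω‖ ^ p) P := fun i => (hXp i).integrable_iff.2 hint
  have hbound : ∀ n ω, ‖S n ω‖ ^ p ≤ ∑ i ∈ Finset.range n, ‖X i ω‖ ^ p := fun n ω => by
    rw [hS]; exact norm_sum_rpow_le_sum_norm_rpow _ _ hp0 hp1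
  have hSint : ∀ n, Integrable (fun ω => ‖S n ω‖ ^ p) P := by
    intro n
    refine (integrable_finsetSum _ fun i _ => hint_i i).mono' ?_
      (ae_of_all _ fun ω => by rw [Real.norm_of_nonneg (by positivity)]; exact hbound n ω)
    have hSm : AEStronglyMeasurable (S n) P := by
      rw [show S n = fun ω => ∑ i ∈ Finset.range n, X i ω from funext (hS n)]
      exact Finset.aestronglyMeasurable_fun_sum _ fun i _ =>
        (hX i).aemeasurable_fst.aestronglyMeasurable
    exact (hSm.norm.aemeasurable.pow_const p).aestronglyMeasurable
  refine ⟨hSint, ∫ ω, ‖X 0 ω‖ ^ p ∂P, fun n _ => ?_⟩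
  calc ∫ ω, ‖S n ω‖ ^ p ∂P ≤ ∫ ω, ∑ i ∈ Finset.range n, ‖X i ω‖ ^ p ∂P :=
        integral_mono (hSint n) (integrable_finsetSum _ fun i _ => hint_i i) (hbound n)
    _ = ∑ i ∈ Finset.range n, ∫ ω, ‖X 0 ω‖ ^ p ∂P := by
        rw [integral_finsetSum _ fun i _ => hint_i i]
        exact Finset.sum_congr rfl fun i _ => (hXp i).integral_eq
    _ = (∫ ω, ‖X 0 ω‖ ^ p ∂P) * (n : ℝ) ^ (1 : ℝ) := by simp [mul_comm]

lemma hasMomentGrowth_of_integral_norm_rpow_smul_le [NormedSpace ℝ B] {S : ℕ → Ω → B}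
    (hint : ∀ n, Integrable (S n) P) {β C : ℝ}
    (hC : ∀ n : ℕ, 1 ≤ n → ∫ ω, ‖((n : ℝ) ^ (-(1 / β))) • S n ω‖ ∂P ≤ C) :
    HasMomentGrowth P S 1 (1 / β) := by
  refine ⟨fun n => by simpa using (hint n).norm, C, fun n hn => ?_⟩
  have hn0 : (0 : ℝ) < n := by exact_mod_cast hn
  have h := hC n hn
  simp_rw [norm_smul, Real.norm_of_nonneg (Real.rpow_nonneg hn0.le _)] at h
  rw [integral_const_mul, Real.rpow_neg hn0.le, inv_mul_le_iff₀ (by positivity)] at h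
  simpa [mul_comm] using h

lemma mul_rpow_add_lt_norm_of_lt [NormedSpace ℝ B] {n a ε γ ρ : ℝ} {s : B} (hn : 0 < n)
    (hε : 0 < ε) (ha : n ^ ρ ≤ a) (h : ε < n ^ (1 - γ) * ‖n⁻¹ • s‖ / a) :
    ε * n ^ (γ + ρ) < ‖s‖ := by
  have hγ : 0 < n ^ γ := by positivity
  have ha0 : 0 < a := (Real.rpow_pos_of_pos hn ρ).trans_le ha
  have hscale : n ^ (1 - γ) * ‖n⁻¹ • s‖ = ‖s‖ / n ^ γ := by
    rw [norm_smul, norm_inv, Real.norm_of_nonneg hn.le, Real.rpow_sub hn, Real.rpow_one]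
    field_simp
  rw [hscale, lt_div_iff₀ ha0, lt_div_iff₀ hγ] at h
  refine h.trans_le' ?_
  rw [Real.rpow_add hn]
  nlinarith [mul_le_mul_of_nonneg_left ha (mul_pos hε hγ).le]

lemma HasMomentGrowth.tendsto_measure [IsFiniteMeasure P] [NormedSpace ℝ B] {S : ℕ → Ω → B}
    {p θ : ℝ}
    (h : HasMomentGrowth P S p θ) (hp : 0 < p) {a : ℕ → ℝ} {γ ρ ε : ℝ} (hε : 0 < ε)
    (hθ : θ < p * (γ + ρ)) (ha : ∀ᶠ n : ℕ in atTop, (n : ℝ) ^ ρ ≤ a n) :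
    Tendsto (fun n : ℕ =>
        (P {ω | ε < (n : ℝ) ^ (1 - γ) * ‖(n : ℝ)⁻¹ • S n ω‖ / a n}).toReal)
      atTop (nhds 0) := by
  obtain ⟨hint, K, hK⟩ := h
  have hdecay : Tendsto (fun n : ℕ => K * ε ^ (-p) * (n : ℝ) ^ (θ - p * (γ + ρ))) atTop
      (nhds 0) := by
    simpa using ((tendsto_rpow_neg_atTop (by linarith : 0 < p * (γ + ρ) - θ)).comp
      tendsto_natCast_atTop_atTop).const_mul (K * ε ^ (-p))
  refine squeeze_zero' (Eventually.of_forall fun n => ENNReal.toReal_nonneg) ?_ hdecay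
  filter_upwards [ha, eventually_ge_atTop 1] with n han hn
  have hn0 : (0 : ℝ) < n := by exact_mod_cast hn
  set τ := ε * (n : ℝ) ^ (γ + ρ)
  have hτ : 0 < τ := by positivity
  have hsub : {ω | ε < (n : ℝ) ^ (1 - γ) * ‖(n : ℝ)⁻¹ • S n ω‖ / a n} ⊆
      {ω | τ ^ p ≤ ‖S n ω‖ ^ p} := fun ω hω =>
    Real.rpow_le_rpow hτ.le (mul_rpow_add_lt_norm_of_lt hn0 hε han hω).le hp.le
  calc (P {ω | ε < (n : ℝ) ^ (1 - γ) * ‖(n : ℝ)⁻¹ • S n ω‖ / a n}).toReal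
      ≤ P.real {ω | τ ^ p ≤ ‖S n ω‖ ^ p} := measureReal_mono hsub
    _ ≤ (∫ ω, ‖S n ω‖ ^ p ∂P) / τ ^ p := by
        rw [le_div_iff₀' (by positivity)]
        exact mul_meas_ge_le_integral_of_nonneg (ae_of_all _ fun ω => by positivity) (hint n) _
    _ ≤ K * (n : ℝ) ^ θ / τ ^ p := by gcongr; exact hK n hn
    _ = K * ε ^ (-p) * (n : ℝ) ^ (θ - p * (γ + ρ)) := by
        rw [Real.mul_rpow hε.le (by positivity), ← Real.rpow_mul hn0.le, Real.rpow_sub hn0,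
          Real.rpow_neg hε.le, mul_comm (γ + ρ) p]
        field_simp

end MomentGrowth

lemma exists_pos_lt_one_div_lt_add {α γ : ℝ} (hα : 0 < α) (hγ : 0 < γ) :
    ∃ β, 0 < β ∧ β < α ∧ 1 / β < γ + 1 / α :=
  ⟨1 / (1 / α + γ / 2), by positivity,
    by rw [div_lt_iff₀ (by positivity)]; field_simp; nlinarith [mul_pos hα hγ],
    by rw [one_div_one_div]; linarith⟩

theorem stmt12_general
    {B : Type*} [NormedAddCommGroup B] [NormedSpace ℝ B]
    [SecondCountableTopology B] [MeasurableSpace B] [BorelSpace B]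
    {Ω : Type*} [MeasurableSpace Ω] (P : Measure Ω) [IsProbabilityMeasure P]
    (X : ℕ → Ω → B) (hmeas : ∀ i, Measurable (X i))
    (hident : ∀ i, P.map (X i) = P.map (X 0))
    (S : ℕ → Ω → B) (hS : ∀ n ω, S n ω = ∑ i ∈ Finset.range n, X i ω)
    (α : ℝ) (hα : 0 < α)
    (htailpos : ∀ x : ℝ, 0 < (P {ω | ‖X 0 ω‖ > x}).toReal)
    (hrv : ∀ t : ℝ, 0 < t → Tendsto (fun x : ℝ =>
        (P {ω | ‖X 0 ω‖ > t * x}).toReal / (P {ω | ‖X 0 ω‖ > x}).toReal)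
        atTop (nhds (t ^ (-α))))
    (a : ℕ → ℝ)
    (ha : ∀ n : ℕ, a n =
      sInf {x : ℝ | 0 ≤ x ∧ 1 - 1 / (n : ℝ) ≤ (P {ω | ‖X 0 ω‖ ≤ x}).toReal})
    (hcond1 : 2 < α → ∃ C : ℝ, ∀ n : ℕ, 1 ≤ n →
      ∫ ω, ‖((n : ℝ) ^ (-(1 / 2 : ℝ))) • S n ω‖ ∂P ≤ C)
    (hcond2 : 1 < α → α ≤ 2 → ∀ β : ℝ, 0 < β → β < α → ∃ C : ℝ, ∀ n : ℕ, 1 ≤ n →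
      ∫ ω, ‖((n : ℝ) ^ (-(1 / β))) • S n ω‖ ∂P ≤ C)
    (γ : ℝ) (hγ0 : 0 < γ) (hγ : max 0 (1 / 2 - 1 / α) < γ)
    (ε : ℝ) (hε : 0 < ε) :
    Tendsto (fun n : ℕ =>
        (P {ω | ε < (n : ℝ) ^ (1 - γ) * ‖(n : ℝ)⁻¹ • S n ω‖ / a n}).toReal)
      atTop (nhds 0) := by
  have hZ : Measurable fun ω => ‖X 0 ω‖ := (hmeas 0).norm
  have hrv2 := hrv 2 two_pos
  have hX : ∀ i, IdentDistrib (X i) (X 0) P P :=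
    fun i => ⟨(hmeas i).aemeasurable, (hmeas 0).aemeasurable, hident i⟩
  have hmoment : ∀ p, 0 < p → p < α → Integrable (fun ω => ‖X 0 ω‖ ^ p) P := fun p hp hpα =>
    integrable_rpow_of_tendsto_ratio hZ (fun ω => norm_nonneg _) htailpos hrv2 hp hpα
  obtain ⟨p, θ, hp, hθ, hgrowth⟩ :
      ∃ p θ, 0 < p ∧ θ / p < γ + 1 / α ∧ HasMomentGrowth P S p θ := by
    obtain ⟨β, hβ, hβα, hβγ⟩ := exists_pos_lt_one_div_lt_add hα hγ0
    rcases le_or_gt α 1 with hα1 | hα1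
    · exact ⟨β, 1, hβ, hβγ,
        hasMomentGrowth_of_identDistrib hX hS hβ (by linarith) (hmoment β hβ hβα)⟩
    have hSint : ∀ n, Integrable (S n) P := fun n => by
      rw [show S n = fun ω => ∑ i ∈ Finset.range n, X i ω from funext (hS n)]
      refine integrable_finsetSum _ fun i _ => (hX i).integrable_iff.2 ?_
      simpa using (integrable_norm_iff (hmeas 0).aestronglyMeasurable).1
        (by simpa using hmoment 1 one_pos hα1)
    rcases le_or_gt α 2 with hα2 | hα2
    · obtain ⟨C, hC⟩ := hcond2 hα1 hα2 β hβ hβα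
      exact ⟨1, 1 / β, one_pos, by rwa [div_one],
        hasMomentGrowth_of_integral_norm_rpow_smul_le hSint hC⟩
    · obtain ⟨C, hC⟩ := hcond1 hα2
      exact ⟨1, 1 / 2, one_pos, by linarith [le_max_right 0 (1 / 2 - 1 / α)],
        hasMomentGrowth_of_integral_norm_rpow_smul_le hSint hC⟩
  obtain ⟨ρ, hρθ, hρα⟩ := exists_between (max_lt (by linarith : θ / p - γ < 1 / α)
    (one_div_pos.2 hα))
  have hρ0 : 0 < ρ := (le_max_right _ _).trans_lt hρθ
  refine hgrowth.tendsto_measure (ρ := ρ) hp hε ?_ ?_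
  · rw [← div_lt_iff₀' hp]; linarith [le_max_left (θ / p - γ) 0]
  · simp only [ha]
    exact eventually_rpow_le_sInf_of_tendsto_ratio hZ htailpos hrv2 hρ0 ((lt_div_iff₀ hα).1 hρα)

theorem stmt12
    {B : Type*} [NormedAddCommGroup B] [NormedSpace ℝ B] [CompleteSpace B]
    [SecondCountableTopology B] [MeasurableSpace B] [BorelSpace B]
    {Ω : Type*} [MeasurableSpace Ω] (P : Measure Ω) [IsProbabilityMeasure P]
    (X : ℕ → Ω → B) (hmeas : ∀ i, Measurable (X i))
    (hindep : iIndepFun X P)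
    (hident : ∀ i, P.map (X i) = P.map (X 0))
    (S : ℕ → Ω → B) (hS : ∀ n ω, S n ω = ∑ i ∈ Finset.range n, X i ω)
    (α : ℝ) (hα : 0 < α)
    (htailpos : ∀ x : ℝ, 0 < (P {ω | ‖X 0 ω‖ > x}).toReal)
    (hrv : ∀ t : ℝ, 0 < t → Tendsto (fun x : ℝ =>
        (P {ω | ‖X 0 ω‖ > t * x}).toReal / (P {ω | ‖X 0 ω‖ > x}).toReal)
        atTop (nhds (t ^ (-α))))
    (a : ℕ → ℝ)
    (ha : ∀ n : ℕ, a n =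
      sInf {x : ℝ | 0 ≤ x ∧ 1 - 1 / (n : ℝ) ≤ (P {ω | ‖X 0 ω‖ ≤ x}).toReal})
    (hmean : Integrable (X 0) P → ∫ ω, X 0 ω ∂P = 0)
    (hcond1 : 2 < α → ∃ C : ℝ, ∀ n : ℕ, 1 ≤ n →
      ∫ ω, ‖((n : ℝ) ^ (-(1 / 2 : ℝ))) • S n ω‖ ∂P ≤ C)
    (hcond2 : 1 < α → α ≤ 2 → ∀ β : ℝ, 0 < β → β < α → ∃ C : ℝ, ∀ n : ℕ, 1 ≤ n →
      ∫ ω, ‖((n : ℝ) ^ (-(1 / β))) • S n ω‖ ∂P ≤ C)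
    (γ : ℝ) (hγ0 : 0 < γ) (hγ1 : γ < 1) (hγ : max 0 (1 / 2 - 1 / α) < γ)
    (ε : ℝ) (hε : 0 < ε) :
    Tendsto (fun n : ℕ =>
        (P {ω | ε < (n : ℝ) ^ (1 - γ) * ‖(n : ℝ)⁻¹ • S n ω‖ / a n}).toReal)
      atTop (nhds 0) :=
  stmt12_general P X hmeas hident S hS α hα htailpos hrv a ha hcond1 hcond2 γ hγ0 hγ ε hε
end

section
/- Let Y be a nonnegative random variable with regularly varying tail of index α > 1, and let a_n = inf{x ≥ 0 : P(Y ≤ x) ≥ 1 − 1/n}. Then for every constant c > 0, lim_{n→∞} n · E( Y·1{Y > c a_n} ) / a_n = (α/(α−1)) · c^{1−α}. -/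
/-!
Write `U x = P(Y > x)`. The layer-cake formula gives `E(Y; Y > x) = x U(x) + ∫_x^∞ U`, and
Karamata's theorem `∫_x^∞ U ~ x U(x) / (α - 1)` follows by dominated convergence from
`∫_x^∞ U / (x U(x)) = ∫_1^∞ U(s x) / U(x) ds`, using Potter's bound `U(s x) ≤ C s^(-β) U(x)`
with `1 < β < α`. Since `U(t a_n) / U(a_n) → t^(-α)` is close to `1` for `t` near `1`, the
quantiles satisfy `n U(a_n) → 1`. Hence, with `x = c a_n`,
`n E(Y; Y > x) / a_n = n U(a_n) · (U(x) / U(a_n)) · c · (1 + ∫_x^∞ U / (x U(x)))`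
tends to `c^(-α) · c · α / (α - 1)`.
-/

open MeasureTheory ProbabilityTheory Filter Set Topology

theorem setIntegral_lt_eq_mul_add_integral_Ioi {Ω : Type*} [MeasurableSpace Ω] (μ : Measure Ω)
    [IsFiniteMeasure μ] {Y : Ω → ℝ} (hY : Measurable Y) {x : ℝ} (hx : 0 ≤ x)
    (hint : IntegrableOn (fun t => μ.real {ω | t < Y ω}) (Ioi x)) :
    ∫ ω in {ω | x < Y ω}, Y ω ∂μ =
      x * μ.real {ω | x < Y ω} + ∫ t in Ioi x, μ.real {ω | t < Y ω} := by
  have hS : MeasurableSet {ω | x < Y ω} := measurableSet_lt measurable_const hY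
  set f := {ω | x < Y ω}.indicator Y
  have hf_nn : 0 ≤ f := indicator_nonneg fun ω hω => hx.trans (le_of_lt hω)
  have hlevel : ∀ t ∈ Ioi (0 : ℝ), μ {ω | t < f ω} = μ {ω | max x t < Y ω} := by
    intro t ht
    congr 1
    ext ω
    by_cases hω : x < Y ω <;> simp [f, hω, not_lt.2 (le_of_lt (mem_Ioi.1 ht))]
  have hlint : ∫⁻ ω, ENNReal.ofReal (f ω) ∂μ =
      ENNReal.ofReal (x * μ.real {ω | x < Y ω}) +
        ENNReal.ofReal (∫ t in Ioi x, μ.real {ω | t < Y ω}) := by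
    rw [lintegral_eq_lintegral_meas_lt μ (ae_of_all _ hf_nn) (hY.indicator hS).aemeasurable,
      setLIntegral_congr_fun measurableSet_Ioi hlevel, ← Ioc_union_Ioi_eq_Ioi hx,
      lintegral_union measurableSet_Ioi (Ioc_disjoint_Ioi le_rfl),
      setLIntegral_congr_fun measurableSet_Ioc fun t ht => by rw [max_eq_left ht.2],
      setLIntegral_congr_fun measurableSet_Ioi fun t ht => by rw [max_eq_right (le_of_lt ht)],
      setLIntegral_const, Real.volume_Ioc, sub_zero,
      ofReal_integral_eq_lintegral_ofReal hint (ae_of_all _ fun t => measureReal_nonneg),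
      ENNReal.ofReal_mul hx, ofReal_measureReal, mul_comm]
    exact congrArg _ <|
      setLIntegral_congr_fun measurableSet_Ioi fun t _ => (ofReal_measureReal).symm
  rw [← integral_indicator hS, integral_eq_lintegral_of_nonneg_ae (ae_of_all _ hf_nn)
    (hY.indicator hS).aestronglyMeasurable, hlint, ENNReal.toReal_add (by simp) (by simp),
    ENNReal.toReal_ofReal (by positivity), ENNReal.toReal_ofReal
    (setIntegral_nonneg measurableSet_Ioi fun t _ => measureReal_nonneg)]

def IsRegularlyVarying (U : ℝ → ℝ) (ρ : ℝ) : Prop :=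
  ∀ t : ℝ, 0 < t → Tendsto (fun x => U (t * x) / U x) atTop (𝓝 (t ^ ρ))

namespace IsRegularlyVarying

variable {U : ℝ → ℝ} {α : ℝ}

theorem tendsto_atTop_zero (hU : IsRegularlyVarying U (-α)) (hα : 0 < α) (hanti : Antitone U)
    (hpos : ∀ x, 0 < x → 0 < U x) : Tendsto U atTop (𝓝 0) := by
  have hU_pos (x : ℝ) : 0 < U x :=
    (hpos _ (lt_max_of_lt_right one_pos)).trans_le (hanti (le_max_left x 1))
  have hlim := tendsto_atTop_ciInf hanti ⟨0, by rintro _ ⟨x, rfl⟩; exact (hU_pos x).le⟩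
  suffices hL : ⨅ x, U x = 0 by rwa [hL] at hlim
  -- a positive limit would make `U (2 * x) / U x` tend to `1 ≠ 2 ^ (-α)`
  by_contra hL
  have hratio := (hlim.comp (tendsto_id.const_mul_atTop two_pos)).div hlim hL
  rw [div_self hL] at hratio
  have h2 : (2 : ℝ) ^ (-α) < 1 := Real.rpow_lt_one_of_one_lt_of_neg one_lt_two (neg_neg_of_pos hα)
  exact h2.ne (tendsto_nhds_unique (hU 2 two_pos) hratio)

-- Potter's bound: iterate `U (2 * y) ≤ 2 ^ (-β) * U y` over the blocks `[2 ^ k, 2 ^ (k + 1)]`.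
theorem eventually_apply_mul_le (hU : IsRegularlyVarying U (-α)) (hanti : Antitone U)
    (hpos : ∀ x, 0 < x → 0 < U x) {β : ℝ} (hβ₀ : 0 ≤ β) (hβ : β < α) :
    ∀ᶠ x in atTop, ∀ s, 1 ≤ s → U (s * x) ≤ 2 ^ β * s ^ (-β) * U x := by
  have h2 : (2 : ℝ) ^ (-α) < 2 ^ (-β) := Real.rpow_lt_rpow_of_exponent_lt one_lt_two (by linarith)
  obtain ⟨X, hX⟩ := eventually_atTop.1 <|
    (eventually_gt_atTop 0).and ((hU 2 two_pos).eventually_lt_const h2)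
  have hdouble : ∀ y, X ≤ y → U (2 * y) ≤ 2 ^ (-β) * U y := fun y hy =>
    ((div_lt_iff₀ (hpos y (hX y hy).1)).1 (hX y hy).2).le
  filter_upwards [eventually_ge_atTop X] with x hx s hs
  have hx0 : 0 < x := (hX x hx).1
  have hbase : ∀ s, 1 ≤ s → s ≤ 2 → U (s * x) ≤ 2 ^ β * s ^ (-β) * U x := by
    intro s hs1 hs2
    have hs0 : 0 < s := by linarith
    have hc : 1 ≤ 2 ^ β * s ^ (-β) := by
      rw [Real.rpow_neg hs0.le, ← div_eq_mul_inv, one_le_div (by positivity)]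
      exact Real.rpow_le_rpow hs0.le hs2 hβ₀
    calc U (s * x) ≤ U x := hanti (le_mul_of_one_le_left hx0.le hs1)
      _ ≤ 2 ^ β * s ^ (-β) * U x := le_mul_of_one_le_left (hpos x hx0).le hc
  have hind : ∀ k : ℕ, ∀ s, 1 ≤ s → s ≤ 2 ^ (k + 1) → U (s * x) ≤ 2 ^ β * s ^ (-β) * U x := by
    intro k
    induction k with
    | zero => simpa using hbase
    | succ k ih =>
      intro s hs1 hs2
      rcases le_or_gt s 2 with hs | hs
      · exact hbase s hs1 hs
      have hs1' : 1 ≤ s / 2 := by linarith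
      calc U (s * x) = U (2 * (s / 2 * x)) := by ring_nf
        _ ≤ 2 ^ (-β) * U (s / 2 * x) := hdouble _ (hx.trans (le_mul_of_one_le_left hx0.le hs1'))
        _ ≤ 2 ^ (-β) * (2 ^ β * (s / 2) ^ (-β) * U x) := by
          gcongr
          exact ih _ hs1' (by rw [pow_succ] at hs2; linarith)
        _ = 2 ^ β * s ^ (-β) * U x := by
          rw [Real.div_rpow (by linarith) zero_le_two, Real.rpow_neg zero_le_two]
          field_simp
  obtain ⟨k, hk⟩ := pow_unbounded_of_one_lt s one_lt_two
  exact hind k s hs (hk.le.trans (pow_le_pow_right₀ one_le_two k.le_succ))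

theorem eventually_integrableOn_Ioi (hU : IsRegularlyVarying U (-α)) (hα : 1 < α)
    (hanti : Antitone U) (hpos : ∀ x, 0 < x → 0 < U x) :
    ∀ᶠ x in atTop, IntegrableOn U (Ioi x) := by
  filter_upwards [hU.eventually_apply_mul_le hanti hpos (β := (1 + α) / 2) (by linarith)
    (by linarith), eventually_gt_atTop 0] with x hbound hx
  rw [← one_mul x, ← integrableOn_Ioi_comp_mul_right_iff U 1 hx]
  refine Integrable.mono' (((integrableOn_Ioi_rpow_of_lt (a := -((1 + α) / 2)) (by linarith)
    one_pos).const_mul (2 ^ ((1 + α) / 2))).mul_const (U x))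
    (hanti.measurable.comp (measurable_id.mul_const x)).aestronglyMeasurable
    (ae_restrict_of_forall_mem measurableSet_Ioi fun s hs => ?_)
  rw [Real.norm_of_nonneg (hpos _ (mul_pos (zero_lt_one.trans hs) hx)).le]
  exact hbound s (le_of_lt hs)

theorem tendsto_integral_Ioi_div (hU : IsRegularlyVarying U (-α)) (hα : 1 < α)
    (hanti : Antitone U) (hpos : ∀ x, 0 < x → 0 < U x) :
    Tendsto (fun x => (∫ t in Ioi x, U t) / (x * U x)) atTop (𝓝 (α - 1)⁻¹) := by
  have hlimit : ∫ s in Ioi (1 : ℝ), s ^ (-α) = (α - 1)⁻¹ := by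
    rw [integral_Ioi_rpow_of_lt (by linarith) one_pos, Real.one_rpow, neg_div, ← div_neg,
      one_div, neg_add, neg_neg, add_comm]
    ring_nf
  have hrescale : ∀ x, 0 < x →
      ∫ s in Ioi 1, U (s * x) / U x = (∫ t in Ioi x, U t) / (x * U x) := by
    intro x hx
    rw [integral_div, integral_comp_mul_right_Ioi U 1 hx, one_mul, smul_eq_mul, mul_comm x,
      div_mul_eq_div_div, div_eq_inv_mul _ x]
    ring
  rw [← hlimit]
  refine (tendsto_integral_filter_of_dominated_convergence (F := fun x s => U (s * x) / U x)
    (fun s => 2 ^ ((1 + α) / 2) * s ^ (-((1 + α) / 2))) ?_ ?_ ?_ ?_).congr' ?_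
  · filter_upwards with x
    exact ((hanti.measurable.comp (measurable_id.mul_const x)).div_const _).aestronglyMeasurable
  · filter_upwards [hU.eventually_apply_mul_le hanti hpos (β := (1 + α) / 2) (by linarith)
      (by linarith), eventually_gt_atTop 0] with x hbound hx
    refine ae_restrict_of_forall_mem measurableSet_Ioi fun s hs => ?_
    rw [Real.norm_of_nonneg (div_nonneg (hpos _ (mul_pos (zero_lt_one.trans hs) hx)).le
      (hpos x hx).le), div_le_iff₀ (hpos x hx)]
    exact hbound s (le_of_lt hs)
  · exact (integrableOn_Ioi_rpow_of_lt (by linarith) one_pos).const_mul _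
  · exact ae_restrict_of_forall_mem measurableSet_Ioi fun s hs => hU s (zero_lt_one.trans hs)
  · filter_upwards [eventually_gt_atTop 0] with x hx using hrescale x hx

end IsRegularlyVarying

noncomputable def tailQuantile (U : ℝ → ℝ) (n : ℕ) : ℝ :=
  sInf {x | 0 ≤ x ∧ U x ≤ 1 / n}

section tailQuantile

variable {U : ℝ → ℝ} {n : ℕ}

theorem nonempty_tailQuantile_set (hU : Tendsto U atTop (𝓝 0)) (hn : 0 < n) :
    {x | 0 ≤ x ∧ U x ≤ 1 / n}.Nonempty :=
  ((eventually_ge_atTop 0).and (hU.eventually_le_const (by positivity))).exists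

theorem apply_mul_tailQuantile_le (hanti : Antitone U) (hU : Tendsto U atTop (𝓝 0)) (hn : 0 < n)
    (hq : 0 < tailQuantile U n) {t : ℝ} (ht : 1 < t) : U (t * tailQuantile U n) ≤ 1 / n := by
  obtain ⟨y, hy, hyt⟩ := exists_lt_of_csInf_lt (nonempty_tailQuantile_set hU hn)
    (lt_mul_of_one_lt_left hq ht)
  exact (hanti hyt.le).trans hy.2

theorem one_div_lt_apply_mul_tailQuantile (hq : 0 < tailQuantile U n) {s : ℝ} (hs₀ : 0 ≤ s)
    (hs₁ : s < 1) : 1 / n < U (s * tailQuantile U n) := by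
  by_contra! h
  exact (mul_lt_of_lt_one_left hq hs₁).not_ge
    (csInf_le ⟨0, fun _ hx => hx.1⟩ ⟨mul_nonneg hs₀ hq.le, h⟩)

theorem tendsto_tailQuantile (hanti : Antitone U) (hpos : ∀ x, 0 < x → 0 < U x)
    (hU : Tendsto U atTop (𝓝 0)) : Tendsto (tailQuantile U) atTop atTop := by
  refine tendsto_atTop.2 fun M => ?_
  obtain ⟨N, hN⟩ :=
    exists_nat_one_div_lt (hpos _ (lt_max_of_lt_right one_pos) : 0 < U (max M 1))
  filter_upwards [eventually_gt_atTop N] with n hn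
  refine (le_max_left M 1).trans (le_csInf (nonempty_tailQuantile_set hU (by omega)) ?_)
  rintro x ⟨-, hx⟩
  by_contra! hlt
  have : (1 : ℝ) / n ≤ 1 / (N + 1) :=
    one_div_le_one_div_of_le (by positivity) (by exact_mod_cast hn)
  linarith [hanti hlt.le]

end tailQuantile

theorem tailQuantile_measure_gt_eq {Ω : Type*} [MeasurableSpace Ω] (P : Measure Ω)
    [IsProbabilityMeasure P] {Y : Ω → ℝ} (hY : Measurable Y) (n : ℕ) :
    tailQuantile (fun x => (P {ω | Y ω > x}).toReal) n =
      sInf {x : ℝ | 0 ≤ x ∧ 1 - 1 / (n : ℝ) ≤ (P {ω | Y ω ≤ x}).toReal} := by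
  rw [tailQuantile]
  congr with x
  have hcompl : (P {ω | Y ω ≤ x}).toReal = 1 - (P {ω | Y ω > x}).toReal := by
    rw [← measureReal_def, show {ω | Y ω ≤ x} = {ω | x < Y ω}ᶜ by ext; simp,
      probReal_compl_eq_one_sub (measurableSet_lt measurable_const hY)]
    rfl
  rw [hcompl]
  constructor <;> rintro ⟨h0, h1⟩ <;> exact ⟨h0, by linarith⟩

namespace IsRegularlyVarying

variable {U : ℝ → ℝ} {α : ℝ}

theorem tendsto_mul_apply_tailQuantile (hU : IsRegularlyVarying U (-α)) (hα : 0 < α)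
    (hanti : Antitone U) (hpos : ∀ x, 0 < x → 0 < U x) :
    Tendsto (fun n : ℕ => n * U (tailQuantile U n)) atTop (𝓝 1) := by
  have hzero := hU.tendsto_atTop_zero hα hanti hpos
  have hq := tendsto_tailQuantile hanti hpos hzero
  have hratio (t : ℝ) (ht : 0 < t) : Tendsto (fun n => U (tailQuantile U n) /
      U (t * tailQuantile U n)) atTop (𝓝 (t ^ (-α))⁻¹) := by
    simpa only [Function.comp_def, inv_div] using
      ((hU t ht).comp hq).inv₀ (Real.rpow_pos_of_pos ht _).ne'
  have hcont : Tendsto (fun t : ℝ => (t ^ (-α))⁻¹) (𝓝 1) (𝓝 1) := by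
    simpa using (Real.continuousAt_rpow_const 1 (-α) (Or.inl one_ne_zero)).tendsto.inv₀
      (by simp)
  have hlarge : ∀ᶠ n : ℕ in atTop, 0 < n ∧ 0 < tailQuantile U n :=
    (eventually_gt_atTop 0).and (hq.eventually_gt_atTop 0)
  -- for `0 < s < 1 < t`, eventually `n * U (a n)` lies between `U (a n) / U (s * a n)` and
  -- `U (a n) / U (t * a n)`, whose limits `s ^ α` and `t ^ α` are as close to `1` as we like
  refine tendsto_order.2 ⟨fun b hb => ?_, fun b hb => ?_⟩
  · obtain ⟨s, hsb, hs⟩ := (((hcont.mono_left nhdsWithin_le_nhds).eventually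
      (lt_mem_nhds hb)).and (Ioo_mem_nhdsLT zero_lt_one)).exists
    filter_upwards [hlarge, (hratio s hs.1).eventually_const_lt hsb] with n ⟨hn, han⟩ hbn
    have hcross := one_div_lt_apply_mul_tailQuantile han hs.1.le hs.2
    refine hbn.trans_le ((div_le_iff₀ (hpos _ (mul_pos hs.1 han))).2 ?_)
    rw [div_lt_iff₀ (by exact_mod_cast hn)] at hcross
    nlinarith [hpos _ han]
  · obtain ⟨t, htb, ht⟩ := (((hcont.mono_left (nhdsWithin_le_nhds (s := Ioi 1))).eventually
      (gt_mem_nhds hb)).and self_mem_nhdsWithin).exists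
    have ht0 : 0 < t := zero_lt_one.trans ht
    filter_upwards [hlarge, (hratio t ht0).eventually_lt_const htb] with n ⟨hn, han⟩ hbn
    have hcross := apply_mul_tailQuantile_le hanti hzero hn han ht
    refine lt_of_le_of_lt ((le_div_iff₀ (hpos _ (mul_pos ht0 han))).2 ?_) hbn
    rw [le_div_iff₀ (by exact_mod_cast hn)] at hcross
    nlinarith [hpos _ han]

end IsRegularlyVarying

theorem stmt14_general
    {Ω : Type*} [MeasurableSpace Ω] (P : Measure Ω) [IsProbabilityMeasure P]
    (Y : Ω → ℝ) (hmeas : Measurable Y)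
    (α : ℝ) (hα : 1 < α)
    (htailpos : ∀ x : ℝ, 0 < x → 0 < (P {ω | Y ω > x}).toReal)
    (hrv : ∀ t : ℝ, 0 < t → Tendsto (fun x : ℝ =>
        (P {ω | Y ω > t * x}).toReal / (P {ω | Y ω > x}).toReal)
        atTop (nhds (t ^ (-α))))
    (a : ℕ → ℝ)
    (ha : ∀ n : ℕ, a n =
      sInf {x : ℝ | 0 ≤ x ∧ 1 - 1 / (n : ℝ) ≤ (P {ω | Y ω ≤ x}).toReal})
    (c : ℝ) (hc : 0 < c) :
    Tendsto (fun n : ℕ =>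
        (n : ℝ) * (∫ ω in {ω | c * a n < Y ω}, Y ω ∂P) / a n)
      atTop (nhds (α / (α - 1) * c ^ (1 - α))) := by
  set U : ℝ → ℝ := fun x => (P {ω | Y ω > x}).toReal
  have hU : IsRegularlyVarying U (-α) := hrv
  have hanti : Antitone U := fun x y hxy => measureReal_mono fun ω hω => hxy.trans_lt hω
  have ha_eq : a = tailQuantile U :=
    funext fun n => (ha n).trans (tailQuantile_measure_gt_eq P hmeas n).symm
  subst ha_eq
  have hq :=
    tendsto_tailQuantile hanti htailpos (hU.tendsto_atTop_zero (by linarith) hanti htailpos)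
  have hcq : Tendsto (fun n => c * tailQuantile U n) atTop atTop := hq.const_mul_atTop hc
  have hlim := (((hU.tendsto_mul_apply_tailQuantile (by linarith) hanti htailpos).mul
    ((hU c hc).comp hq)).mul_const c).mul
    ((tendsto_const_nhds (x := 1)).add ((hU.tendsto_integral_Ioi_div hα hanti htailpos).comp hcq))
  have hvalue : 1 * c ^ (-α) * c * (1 + (α - 1)⁻¹) = α / (α - 1) * c ^ (1 - α) := by
    rw [show 1 - α = -α + 1 by ring, Real.rpow_add hc, Real.rpow_one]
    have : α - 1 ≠ 0 := by linarith
    field_simp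
    ring
  rw [← hvalue]
  refine hlim.congr' ?_
  filter_upwards [hq.eventually_gt_atTop 0,
    hcq.eventually (hU.eventually_integrableOn_Ioi hα hanti htailpos)] with n hqn hint
  have hcqn : 0 < c * tailQuantile U n := mul_pos hc hqn
  have hlayer : ∫ ω in {ω | c * tailQuantile U n < Y ω}, Y ω ∂P =
      c * tailQuantile U n * U (c * tailQuantile U n) + ∫ t in Ioi (c * tailQuantile U n), U t :=
    setIntegral_lt_eq_mul_add_integral_Ioi P hmeas hcqn.le hint
  rw [hlayer]
  have hUcq : 0 < U (c * tailQuantile U n) := htailpos _ hcqn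
  have hUq : 0 < U (tailQuantile U n) := htailpos _ hqn
  simp only [Function.comp_apply]
  field_simp

theorem stmt14
    {Ω : Type*} [MeasurableSpace Ω] (P : Measure Ω) [IsProbabilityMeasure P]
    (Y : Ω → ℝ) (hmeas : Measurable Y) (hnonneg : ∀ ω, 0 ≤ Y ω)
    (α : ℝ) (hα : 1 < α)
    (htailpos : ∀ x : ℝ, 0 < x → 0 < (P {ω | Y ω > x}).toReal)
    (hrv : ∀ t : ℝ, 0 < t → Tendsto (fun x : ℝ =>
        (P {ω | Y ω > t * x}).toReal / (P {ω | Y ω > x}).toReal)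
        atTop (nhds (t ^ (-α))))
    (a : ℕ → ℝ)
    (ha : ∀ n : ℕ, a n =
      sInf {x : ℝ | 0 ≤ x ∧ 1 - 1 / (n : ℝ) ≤ (P {ω | Y ω ≤ x}).toReal})
    (c : ℝ) (hc : 0 < c) :
    Tendsto (fun n : ℕ =>
        (n : ℝ) * (∫ ω in {ω | c * a n < Y ω}, Y ω ∂P) / a n)
      atTop (nhds (α / (α - 1) * c ^ (1 - α))) :=
  stmt14_general P Y hmeas α hα htailpos hrv a ha c hc
end

section
/- Let X₁ and X₂ be independent copies of X. Then the symmetrized variable X₁ − X₂ satisfies P(X₁ − X₂ > x) / P(|X| > x) → 1 as x → ∞; in particular X₁ − X₂ has regularly varying right tail of index α. -/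
open MeasureTheory ProbabilityTheory Filter Topology Set

/-!
Squeeze `P(X₁ - X₂ > x)` between two bounds. From above, `X₁ - X₂ > x` forces `X₁ > (1 - ε)x`,
or `X₂ ≤ -(1 - ε)x`, or both `X₁ > εx` and `X₂ ≤ -εx`; by independence the last event has
probability `P(X > εx) P(X ≤ -εx) = o(P(|X| > x))`. From below, it contains the disjoint events
`{X₁ > (1 + 2ε)x, |X₂| ≤ εx}` and `{|X₁| ≤ εx, X₂ ≤ -(1 + 2ε)x}`. After dividing by
`P(|X| > x)`, tail balance (`p + q = 1`) and regular variation send the two bounds to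
`(1 - ε)^(-α)` and `(1 + 2ε)^(-α)`, and `ε → 0` gives the limit `1`. A tail asymptotically
equivalent to a regularly varying one is regularly varying with the same index.
-/

theorem tendsto_of_forall_eventually_bounds {ι α β : Type*} [TopologicalSpace β] [LinearOrder β]
    [OrderTopology β] {L : Filter ι} [L.NeBot] {l : Filter α} {f : α → β} {lo hi : ι → α → β}
    {a b : ι → β} {c : β} (ha : Tendsto a L (𝓝 c)) (hb : Tendsto b L (𝓝 c))
    (hlo : ∀ᶠ i in L, Tendsto (lo i) l (𝓝 (a i)) ∧ ∀ᶠ x in l, lo i x ≤ f x)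
    (hhi : ∀ᶠ i in L, Tendsto (hi i) l (𝓝 (b i)) ∧ ∀ᶠ x in l, f x ≤ hi i x) :
    Tendsto f l (𝓝 c) := by
  refine tendsto_order.2 ⟨fun c' hc' => ?_, fun c' hc' => ?_⟩
  · obtain ⟨i, hai, hloi, hle⟩ := ((ha.eventually (lt_mem_nhds hc')).and hlo).exists
    filter_upwards [hloi.eventually (lt_mem_nhds hai), hle] with x h1 h2 using h1.trans_le h2
  · obtain ⟨i, hbi, hhii, hle⟩ := ((hb.eventually (gt_mem_nhds hc')).and hhi).exists
    filter_upwards [hhii.eventually (gt_mem_nhds hbi), hle] with x h1 h2 using h2.trans_lt h1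

theorem Filter.Tendsto.div_trans {α : Type*} {l : Filter α} {f g h : α → ℝ} {a b : ℝ}
    (hfg : Tendsto (fun x => f x / g x) l (𝓝 a)) (hg : ∀ᶠ x in l, g x ≠ 0)
    (hgh : Tendsto (fun x => g x / h x) l (𝓝 b)) :
    Tendsto (fun x => f x / h x) l (𝓝 (a * b)) := by
  refine (hfg.mul hgh).congr' ?_
  filter_upwards [hg] with x hx
  rw [div_mul_div_comm, mul_comm (g x), mul_div_mul_right _ _ hx]

theorem eventually_ne_zero_of_tendsto_div {α : Type*} {l : Filter α} {f g : α → ℝ} {a : ℝ}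
    (h : Tendsto (fun x => f x / g x) l (𝓝 a)) (ha : a ≠ 0) : ∀ᶠ x in l, g x ≠ 0 := by
  filter_upwards [h.eventually_ne ha] with x hx hg
  simp [hg] at hx

section RegularVariation

variable {f g T : ℝ → ℝ} {c l m : ℝ}

theorem tendsto_comp_mul_div (hc : 0 < c) (hT : ∀ᶠ x in atTop, T x ≠ 0)
    (hf : Tendsto (fun x => f x / T x) atTop (𝓝 l))
    (hTc : Tendsto (fun x => T (c * x) / T x) atTop (𝓝 m)) :
    Tendsto (fun x => f (c * x) / T x) atTop (𝓝 (l * m)) :=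
  have hcx : Tendsto (fun x => c * x) atTop atTop := tendsto_id.const_mul_atTop hc
  (hf.comp hcx).div_trans (hcx.eventually hT) hTc

theorem tendsto_comp_mul_div_self_of_tendsto_div_one (hc : 0 < c)
    (hT : ∀ᶠ x in atTop, T x ≠ 0) (hg : Tendsto (fun x => g x / T x) atTop (𝓝 1))
    (hTc : Tendsto (fun x => T (c * x) / T x) atTop (𝓝 m)) :
    Tendsto (fun x => g (c * x) / g x) atTop (𝓝 m) := by
  have hTg : Tendsto (fun x => T x / g x) atTop (𝓝 1) := by
    simpa only [inv_div, inv_one] using hg.inv₀ one_ne_zero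
  simpa using (tendsto_comp_mul_div hc hT hg hTc).div_trans hT hTg

end RegularVariation

section Probability

variable {Ω : Type*} [MeasurableSpace Ω] {P : Measure Ω}

theorem tendsto_measureReal_gt_atTop [IsFiniteMeasure P] {Y : Ω → ℝ} (hY : Measurable Y) :
    Tendsto (fun x => P.real {ω | Y ω > x}) atTop (𝓝 0) := by
  have h := tendsto_measure_iInter_atTop (μ := P) (s := fun x : ℝ => {ω | Y ω > x})
    (fun x => (hY measurableSet_Ioi).nullMeasurableSet)
    (fun x y hxy ω hω => lt_of_le_of_lt hxy hω) ⟨0, measure_ne_top _ _⟩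
  have hempty : ⋂ x : ℝ, {ω | Y ω > x} = ∅ :=
    eq_empty_of_forall_notMem fun ω hω => lt_irrefl (Y ω) (mem_iInter.1 hω (Y ω))
  rw [hempty, measure_empty] at h
  exact (ENNReal.tendsto_toReal ENNReal.zero_ne_top).comp h

theorem ProbabilityTheory.IndepFun.measureReal_inter_preimage_eq_mul {Y Z : Ω → ℝ}
    (h : IndepFun Y Z P) {s t : Set ℝ} (hs : MeasurableSet s) (ht : MeasurableSet t) :
    P.real (Y ⁻¹' s ∩ Z ⁻¹' t) = P.real (Y ⁻¹' s) * P.real (Z ⁻¹' t) := by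
  simp only [measureReal_def, h.measure_inter_preimage_eq_mul s t hs ht, ENNReal.toReal_mul]

variable [IsFiniteMeasure P] {Y Z : Ω → ℝ}

theorem ProbabilityTheory.IndepFun.measureReal_sub_gt_add_le (h : IndepFun Y Z P) (a b : ℝ) :
    P.real {ω | Y ω - Z ω > a + b} ≤
      P.real {ω | Y ω > b} + P.real {ω | Z ω ≤ -b} +
        P.real {ω | Y ω > a} * P.real {ω | Z ω ≤ -a} := by
  have hsub : {ω | Y ω - Z ω > a + b} ⊆
      {ω | Y ω > b} ∪ {ω | Z ω ≤ -b} ∪ (Y ⁻¹' Ioi a ∩ Z ⁻¹' Iic (-a)) := by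
    intro ω hω
    simp only [mem_ofPred_eq, mem_union, mem_inter_iff, mem_preimage, mem_Ioi, mem_Iic] at hω ⊢
    by_contra! hcon
    obtain ⟨⟨h1, h2⟩, h3⟩ := hcon
    rcases le_or_gt (Y ω) a with h4 | h4
    · linarith
    · linarith [h3 h4]
  calc P.real {ω | Y ω - Z ω > a + b}
      ≤ P.real ({ω | Y ω > b} ∪ {ω | Z ω ≤ -b} ∪ (Y ⁻¹' Ioi a ∩ Z ⁻¹' Iic (-a))) :=
        measureReal_mono hsub
    _ ≤ P.real {ω | Y ω > b} + P.real {ω | Z ω ≤ -b} + P.real (Y ⁻¹' Ioi a ∩ Z ⁻¹' Iic (-a)) :=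
        (measureReal_union_le _ _).trans (by gcongr; exact measureReal_union_le _ _)
    _ = _ := by rw [h.measureReal_inter_preimage_eq_mul measurableSet_Ioi measurableSet_Iic]; rfl

theorem ProbabilityTheory.IndepFun.le_measureReal_sub_gt (h : IndepFun Y Z P)
    (hY : Measurable Y) (hZ : Measurable Z) {a b x : ℝ} (hx : 0 ≤ x) (hxab : x < b - a) :
    P.real {ω | Y ω > b} * P.real {ω | |Z ω| ≤ a} +
        P.real {ω | |Y ω| ≤ a} * P.real {ω | Z ω ≤ -b} ≤
      P.real {ω | Y ω - Z ω > x} := by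
  have hmabs : MeasurableSet {y : ℝ | |y| ≤ a} := measurableSet_le measurable_abs measurable_const
  set A := Y ⁻¹' Ioi b ∩ Z ⁻¹' {y | |y| ≤ a}
  set B := Y ⁻¹' {y | |y| ≤ a} ∩ Z ⁻¹' Iic (-b)
  have hdisj : Disjoint A B := by
    refine disjoint_left.2 fun ω (hA : b < Y ω ∧ |Z ω| ≤ a) (hB : |Y ω| ≤ a ∧ Z ω ≤ -b) => ?_
    linarith [le_abs_self (Y ω), hA.1, hB.1]
  have hsub : A ∪ B ⊆ {ω | Y ω - Z ω > x} := by
    rintro ω (⟨hYω : b < Y ω, hZω : |Z ω| ≤ a⟩ | ⟨hYω : |Y ω| ≤ a, hZω : Z ω ≤ -b⟩) <;>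
      show x < Y ω - Z ω <;> linarith [le_abs_self (Z ω), neg_abs_le (Y ω)]
  calc _ = P.real A + P.real B := by
        rw [h.measureReal_inter_preimage_eq_mul measurableSet_Ioi hmabs,
          h.measureReal_inter_preimage_eq_mul hmabs measurableSet_Iic]; rfl
    _ = P.real (A ∪ B) :=
        (measureReal_union hdisj ((hY hmabs).inter (hZ measurableSet_Iic))).symm
    _ ≤ _ := measureReal_mono hsub

end Probability

section IdentDistrib

variable {Ω : Type*} [MeasurableSpace Ω] {P : Measure Ω} [IsProbabilityMeasure P]
  {X X₁ X₂ : Ω → ℝ}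

theorem measureReal_sub_gt_add_le_of_identDistrib (h1 : IdentDistrib X₁ X P P)
    (h2 : IdentDistrib X₂ X P P) (hind : IndepFun X₁ X₂ P) (a b : ℝ) :
    P.real {ω | X₁ ω - X₂ ω > a + b} ≤
      P.real {ω | X ω > b} + P.real {ω | X ω ≤ -b} +
        P.real {ω | X ω > a} * P.real {ω | X ω ≤ -a} := by
  have e1 (y : ℝ) : P.real {ω | X₁ ω > y} = P.real {ω | X ω > y} :=
    congrArg ENNReal.toReal (h1.measure_mem_eq measurableSet_Ioi)
  have e2 (y : ℝ) : P.real {ω | X₂ ω ≤ y} = P.real {ω | X ω ≤ y} :=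
    congrArg ENNReal.toReal (h2.measure_mem_eq measurableSet_Iic)
  simpa only [e1, e2] using hind.measureReal_sub_gt_add_le a b

theorem le_measureReal_sub_gt_of_identDistrib (hX : Measurable X) (hX₁ : Measurable X₁)
    (hX₂ : Measurable X₂) (h1 : IdentDistrib X₁ X P P) (h2 : IdentDistrib X₂ X P P)
    (hind : IndepFun X₁ X₂ P) {a b x : ℝ} (hx : 0 ≤ x) (hxab : x < b - a) :
    (1 - P.real {ω | |X ω| > a}) * (P.real {ω | X ω > b} + P.real {ω | X ω ≤ -b}) ≤
      P.real {ω | X₁ ω - X₂ ω > x} := by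
  have hmabs : MeasurableSet {y : ℝ | |y| ≤ a} := measurableSet_le measurable_abs measurable_const
  have habs : P.real {ω | |X ω| ≤ a} = 1 - P.real {ω | |X ω| > a} := by
    rw [← probReal_compl_eq_one_sub (measurableSet_lt measurable_const hX.abs)]
    congr 1
    ext ω
    simp
  have e1 (s : Set ℝ) (hs : MeasurableSet s) : P.real (X₁ ⁻¹' s) = P.real (X ⁻¹' s) :=
    congrArg ENNReal.toReal (h1.measure_mem_eq hs)
  have e2 (s : Set ℝ) (hs : MeasurableSet s) : P.real (X₂ ⁻¹' s) = P.real (X ⁻¹' s) :=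
    congrArg ENNReal.toReal (h2.measure_mem_eq hs)
  calc _ = P.real (X₁ ⁻¹' Ioi b) * P.real (X₂ ⁻¹' {y | |y| ≤ a}) +
        P.real (X₁ ⁻¹' {y | |y| ≤ a}) * P.real (X₂ ⁻¹' Iic (-b)) := by
        rw [e1 _ measurableSet_Ioi, e2 _ hmabs, e1 _ hmabs, e2 _ measurableSet_Iic]
        change _ = P.real {ω | X ω > b} * P.real {ω | |X ω| ≤ a} +
          P.real {ω | |X ω| ≤ a} * P.real {ω | X ω ≤ -b}
        rw [habs]
        ring
    _ ≤ _ := hind.le_measureReal_sub_gt hX₁ hX₂ hx hxab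

theorem tendsto_measureReal_sub_gt_div_abs_gt (hX : Measurable X) (hX₁ : Measurable X₁)
    (hX₂ : Measurable X₂) (h1 : IdentDistrib X₁ X P P) (h2 : IdentDistrib X₂ X P P)
    (hind : IndepFun X₁ X₂ P) {α p q : ℝ} (hpq : p + q = 1)
    (hT : ∀ᶠ x in atTop, P.real {ω | |X ω| > x} ≠ 0)
    (htailp : Tendsto (fun x => P.real {ω | X ω > x} / P.real {ω | |X ω| > x}) atTop (𝓝 p))
    (htailq : Tendsto (fun x => P.real {ω | X ω ≤ -x} / P.real {ω | |X ω| > x}) atTop (𝓝 q))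
    (hrv : ∀ t : ℝ, 0 < t → Tendsto (fun x =>
      P.real {ω | |X ω| > t * x} / P.real {ω | |X ω| > x}) atTop (𝓝 (t ^ (-α)))) :
    Tendsto (fun x => P.real {ω | X₁ ω - X₂ ω > x} / P.real {ω | |X ω| > x}) atTop (𝓝 1) := by
  have hS : Tendsto (fun x => (P.real {ω | X ω > x} + P.real {ω | X ω ≤ -x}) /
      P.real {ω | |X ω| > x}) atTop (𝓝 1) := by
    simpa only [add_div, hpq] using htailp.add htailq
  have hSc (c : ℝ) (hc : 0 < c) : Tendsto (fun x => (P.real {ω | X ω > c * x} +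
      P.real {ω | X ω ≤ -(c * x)}) / P.real {ω | |X ω| > x}) atTop (𝓝 (c ^ (-α))) := by
    simpa using tendsto_comp_mul_div hc hT hS (hrv c hc)
  have hcx (c : ℝ) (hc : 0 < c) : Tendsto (fun x : ℝ => c * x) atTop atTop :=
    tendsto_id.const_mul_atTop hc
  refine tendsto_of_forall_eventually_bounds (L := 𝓝[>] 0)
    (lo := fun ε x => (1 - P.real {ω | |X ω| > ε * x}) * (P.real {ω | X ω > (1 + 2 * ε) * x} +
      P.real {ω | X ω ≤ -((1 + 2 * ε) * x)}) / P.real {ω | |X ω| > x})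
    (hi := fun ε x => (P.real {ω | X ω > (1 - ε) * x} + P.real {ω | X ω ≤ -((1 - ε) * x)} +
      P.real {ω | X ω > ε * x} * P.real {ω | X ω ≤ -(ε * x)}) / P.real {ω | |X ω| > x})
    (a := fun ε => (1 + 2 * ε) ^ (-α)) (b := fun ε => (1 - ε) ^ (-α)) ?_ ?_ ?_ ?_
  · have : ContinuousAt (fun ε : ℝ => (1 + 2 * ε) ^ (-α)) 0 := by fun_prop (disch := norm_num)
    simpa using this.tendsto.mono_left nhdsWithin_le_nhds
  · have : ContinuousAt (fun ε : ℝ => (1 - ε) ^ (-α)) 0 := by fun_prop (disch := norm_num)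
    simpa using this.tendsto.mono_left nhdsWithin_le_nhds
  · filter_upwards [self_mem_nhdsWithin] with ε (hε : 0 < ε)
    refine ⟨?_, ?_⟩
    · have hT0 := (tendsto_measureReal_gt_atTop (P := P) hX.abs).comp (hcx ε hε)
      simpa [mul_div_assoc] using (hT0.const_sub 1).mul (hSc (1 + 2 * ε) (by positivity))
    · filter_upwards [eventually_gt_atTop 0] with x hx
      refine div_le_div_of_nonneg_right ?_ measureReal_nonneg
      exact le_measureReal_sub_gt_of_identDistrib hX hX₁ hX₂ h1 h2 hind hx.le (by nlinarith)
  · filter_upwards [Ioo_mem_nhdsGT one_pos] with ε ⟨hε0, hε1⟩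
    refine ⟨?_, Eventually.of_forall fun x => ?_⟩
    · have hF0 := (tendsto_measureReal_gt_atTop (P := P) hX).comp (hcx ε hε0)
      have hFq := tendsto_comp_mul_div hε0 hT htailq (hrv ε hε0)
      simpa [add_div, mul_div_assoc] using
        (hSc (1 - ε) (by linarith)).add (hF0.mul hFq)
    · refine div_le_div_of_nonneg_right ?_ measureReal_nonneg
      simpa only [show ε * x + (1 - ε) * x = x by ring] using
        measureReal_sub_gt_add_le_of_identDistrib h1 h2 hind (ε * x) ((1 - ε) * x)

end IdentDistrib

theorem stmt17_general
    {Ω : Type*} [MeasurableSpace Ω] (P : Measure Ω) [IsProbabilityMeasure P]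
    (X X₁ X₂ : Ω → ℝ)
    (hmX : Measurable X) (hm1 : Measurable X₁) (hm2 : Measurable X₂)
    (hid1 : P.map X₁ = P.map X) (hid2 : P.map X₂ = P.map X)
    (hindep : IndepFun X₁ X₂ P)
    (α p q : ℝ) (hp0 : 0 < p) (hq : q = 1 - p)
    (htailp : Tendsto (fun x : ℝ =>
        (P {ω | X ω > x}).toReal / (P {ω | |X ω| > x}).toReal) atTop (nhds p))
    (htailq : Tendsto (fun x : ℝ =>
        (P {ω | X ω ≤ -x}).toReal / (P {ω | |X ω| > x}).toReal) atTop (nhds q))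
    (hrv : ∀ t : ℝ, 0 < t → Tendsto (fun x : ℝ =>
        (P {ω | |X ω| > t * x}).toReal / (P {ω | |X ω| > x}).toReal)
        atTop (nhds (t ^ (-α)))) :
    Tendsto (fun x : ℝ =>
        (P {ω | X₁ ω - X₂ ω > x}).toReal / (P {ω | |X ω| > x}).toReal) atTop (nhds 1)
    ∧
    ∀ t : ℝ, 0 < t → Tendsto (fun x : ℝ =>
        (P {ω | X₁ ω - X₂ ω > t * x}).toReal / (P {ω | X₁ ω - X₂ ω > x}).toReal)
        atTop (nhds (t ^ (-α))) := by
  have hT := eventually_ne_zero_of_tendsto_div htailp hp0.ne'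
  have hsym := tendsto_measureReal_sub_gt_div_abs_gt hmX hm1 hm2
    ⟨hm1.aemeasurable, hmX.aemeasurable, hid1⟩ ⟨hm2.aemeasurable, hmX.aemeasurable, hid2⟩
    hindep (by rw [hq]; ring) hT htailp htailq hrv
  exact ⟨hsym, fun t ht => tendsto_comp_mul_div_self_of_tendsto_div_one ht hT hsym (hrv t ht)⟩

theorem stmt17
    {Ω : Type*} [MeasurableSpace Ω] (P : Measure Ω) [IsProbabilityMeasure P]
    (X X₁ X₂ : Ω → ℝ)
    (hmX : Measurable X) (hm1 : Measurable X₁) (hm2 : Measurable X₂)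
    (hid1 : P.map X₁ = P.map X) (hid2 : P.map X₂ = P.map X)
    (hindep : IndepFun X₁ X₂ P)
    (α p q : ℝ) (hα : 0 < α) (hp0 : 0 < p) (hp1 : p < 1) (hq : q = 1 - p)
    (htailp : Tendsto (fun x : ℝ =>
        (P {ω | X ω > x}).toReal / (P {ω | |X ω| > x}).toReal) atTop (nhds p))
    (htailq : Tendsto (fun x : ℝ =>
        (P {ω | X ω ≤ -x}).toReal / (P {ω | |X ω| > x}).toReal) atTop (nhds q))
    (hrv : ∀ t : ℝ, 0 < t → Tendsto (fun x : ℝ =>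
        (P {ω | |X ω| > t * x}).toReal / (P {ω | |X ω| > x}).toReal)
        atTop (nhds (t ^ (-α)))) :
    Tendsto (fun x : ℝ =>
        (P {ω | X₁ ω - X₂ ω > x}).toReal / (P {ω | |X ω| > x}).toReal) atTop (nhds 1)
    ∧
    ∀ t : ℝ, 0 < t → Tendsto (fun x : ℝ =>
        (P {ω | X₁ ω - X₂ ω > t * x}).toReal / (P {ω | X₁ ω - X₂ ω > x}).toReal)
        atTop (nhds (t ^ (-α))) :=
  stmt17_general P X X₁ X₂ hmX hm1 hm2 hid1 hid2 hindep α p q hp0 hq htailp htailq hrv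
end
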